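/- Key inequality in the proof of Proposition 1 (inequality (eq:ineq-2)): Fix λ > 0, a joint agent-state based policy π, a time t, and let π̄²_t be any greedy update for agent 2 at time t. Then Σ_{s,y,z₋,a¹,z¹} ζ^π_t(s,y,z₋)·π¹_t(a¹,z¹|y¹,z¹₋)·exp(λ·Q^π_t(s,y,z₋,(a¹,π̄²_t(y²,z²₋)_A),(z¹,π̄²_t(y²,z²₋)_Z))) ≥ Σ_{s,y,z₋,a,z} ζ^π_t(s,y,z₋)·π¹_t(a¹,z¹|y¹,z¹₋)·π²_t(a²,z²|y²,z²₋)·exp(λ·Q^π_t(s,y,z₋,a,z)), where π̄²_t(y²,z²₋) = (π̄²_t(y²,z²₋)_A, π̄²_t(y²,z²₋)_Z) ∈ A² × Z² denotes the deterministic greedy choice. -/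

import Mathlib

open Finset
open scoped Classical

/-- A two-agent finite-horizon Dec-POMDP. -/
structure DecPOMDP (S Y1 Y2 A1 A2 Z1 Z2 : Type)
    [Fintype S] [Fintype Y1] [Fintype Y2] [Fintype A1] [Fintype A2]
    [Fintype Z1] [Fintype Z2] where
  P : S → A1 × A2 → S × Y1 × Y2 → ℝ
  P_nonneg : ∀ s a x, 0 ≤ P s a x
  P_sum : ∀ s a, ∑ x, P s a x = 1
  r : S → A1 × A2 → ℝ
  init : S × Y1 × Y2 → ℝ
  init_nonneg : ∀ x, 0 ≤ init x
  init_sum : ∑ x, init x = 1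
  phi1 : Z1 → ℝ
  phi1_nonneg : ∀ z, 0 ≤ phi1 z
  phi1_sum : ∑ z, phi1 z = 1
  phi2 : Z2 → ℝ
  phi2_nonneg : ∀ z, 0 ≤ phi2 z
  phi2_sum : ∑ z, phi2 z = 1
  T : ℕ
  T_pos : 1 ≤ T

variable {S Y1 Y2 A1 A2 Z1 Z2 : Type}
  [Fintype S] [Fintype Y1] [Fintype Y2] [Fintype A1] [Fintype A2]
  [Fintype Z1] [Fintype Z2]
  [Nonempty S] [Nonempty Y1] [Nonempty Y2] [Nonempty A1] [Nonempty A2]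
  [Nonempty Z1] [Nonempty Z2]

/-- A stage decision rule is a pmf on actions and next agent states for each
observation/agent-state pair. -/
def IsRule {Y Z A : Type} [Fintype A] [Fintype Z] (ρ : Y → Z → A × Z → ℝ) : Prop :=
  (∀ y z x, 0 ≤ ρ y z x) ∧ ∀ y z, ∑ x, ρ y z x = 1

/-- An agent-state based policy: a stage rule for every (0-indexed) time. -/
def IsPolicy {Y Z A : Type} [Fintype A] [Fintype Z] (π : ℕ → Y → Z → A × Z → ℝ) : Prop :=
  ∀ t, IsRule (π t)

/-- The marginal distribution ζ^π_t on (s_t, y_t, z_{t-1}) (time is 0-indexed). -/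
noncomputable def zetaM (M : DecPOMDP S Y1 Y2 A1 A2 Z1 Z2)
    (π1 : ℕ → Y1 → Z1 → A1 × Z1 → ℝ) (π2 : ℕ → Y2 → Z2 → A2 × Z2 → ℝ) :
    ℕ → S → Y1 × Y2 → Z1 × Z2 → ℝ
  | 0 => fun s y zm => M.init (s, y.1, y.2) * M.phi1 zm.1 * M.phi2 zm.2
  | (t+1) => fun s y zm =>
      ∑ s' : S, ∑ y' : Y1 × Y2, ∑ a' : A1 × A2, ∑ zm' : Z1 × Z2,
        zetaM M π1 π2 t s' y' zm' *
        (π1 t y'.1 zm'.1 (a'.1, zm.1) * π2 t y'.2 zm'.2 (a'.2, zm.2)) *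
        M.P s' a' (s, y.1, y.2)

/-- Auxiliary risk-seeking centralized Q-function, indexed by the number `m` of
remaining steps, so that the Q-function at (0-indexed) time `t` is `Qaux (T-1-t)`. -/
noncomputable def Qaux (M : DecPOMDP S Y1 Y2 A1 A2 Z1 Z2)
    (π1 : ℕ → Y1 → Z1 → A1 × Z1 → ℝ) (π2 : ℕ → Y2 → Z2 → A2 × Z2 → ℝ) (lam : ℝ) :
    ℕ → S → Y1 × Y2 → Z1 × Z2 → A1 × A2 → Z1 × Z2 → ℝ
  | 0 => fun s _ _ a _ => M.r s a
  | (m+1) => fun s _ _ a z => M.r s a + (1/lam) * Real.log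
      (∑ sp : S, ∑ yp : Y1 × Y2, ∑ ap : A1 × A2, ∑ zp : Z1 × Z2,
        M.P s a (sp, yp.1, yp.2) *
        (π1 (M.T - 1 - m) yp.1 z.1 (ap.1, zp.1) * π2 (M.T - 1 - m) yp.2 z.2 (ap.2, zp.2)) *
        Real.exp (lam * Qaux M π1 π2 lam m sp yp z ap zp))

/-- The risk-seeking centralized Q-function at (0-indexed) time `t`. -/
noncomputable def Qfun (M : DecPOMDP S Y1 Y2 A1 A2 Z1 Z2)
    (π1 : ℕ → Y1 → Z1 → A1 × Z1 → ℝ) (π2 : ℕ → Y2 → Z2 → A2 × Z2 → ℝ) (lam : ℝ) (t : ℕ) :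
    S → Y1 × Y2 → Z1 × Z2 → A1 × A2 → Z1 × Z2 → ℝ :=
  Qaux M π1 π2 lam (M.T - 1 - t)

/-- Risk-seeking performance J^λ_{t:T}(π) (time is 0-indexed). -/
noncomputable def Jrisk (M : DecPOMDP S Y1 Y2 A1 A2 Z1 Z2)
    (π1 : ℕ → Y1 → Z1 → A1 × Z1 → ℝ) (π2 : ℕ → Y2 → Z2 → A2 × Z2 → ℝ)
    (lam : ℝ) (t : ℕ) : ℝ :=
  (1/lam) * Real.log
    (∑ s : S, ∑ y : Y1 × Y2, ∑ zm : Z1 × Z2, ∑ a : A1 × A2, ∑ z : Z1 × Z2,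
      zetaM M π1 π2 t s y zm *
      (π1 t y.1 zm.1 (a.1, z.1) * π2 t y.2 zm.2 (a.2, z.2)) *
      Real.exp (lam * Qfun M π1 π2 lam t s y zm a z))

/-- Marginal of ζ^π_t on agent 1's (observation, previous agent state). -/
noncomputable def marg1 (M : DecPOMDP S Y1 Y2 A1 A2 Z1 Z2)
    (π1 : ℕ → Y1 → Z1 → A1 × Z1 → ℝ) (π2 : ℕ → Y2 → Z2 → A2 × Z2 → ℝ)
    (t : ℕ) (y1 : Y1) (z1m : Z1) : ℝ :=
  ∑ s : S, ∑ y2 : Y2, ∑ z2m : Z2, zetaM M π1 π2 t s (y1, y2) (z1m, z2m)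

/-- Marginal of ζ^π_t on agent 2's (observation, previous agent state). -/
noncomputable def marg2 (M : DecPOMDP S Y1 Y2 A1 A2 Z1 Z2)
    (π1 : ℕ → Y1 → Z1 → A1 × Z1 → ℝ) (π2 : ℕ → Y2 → Z2 → A2 × Z2 → ℝ)
    (t : ℕ) (y2 : Y2) (z2m : Z2) : ℝ :=
  ∑ s : S, ∑ y1 : Y1, ∑ z1m : Z1, zetaM M π1 π2 t s (y1, y2) (z1m, z2m)

/-- Averaged local Q-function for agent 1 at time t. -/
noncomputable def Qbar1 (M : DecPOMDP S Y1 Y2 A1 A2 Z1 Z2)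
    (π1 : ℕ → Y1 → Z1 → A1 × Z1 → ℝ) (π2 : ℕ → Y2 → Z2 → A2 × Z2 → ℝ)
    (lam : ℝ) (t : ℕ) (y1 : Y1) (z1m : Z1) (a1 : A1) (z1 : Z1) : ℝ :=
  (1/lam) * Real.log
    (∑ s : S, ∑ y2 : Y2, ∑ z2m : Z2, ∑ a2 : A2, ∑ z2 : Z2,
      (zetaM M π1 π2 t s (y1, y2) (z1m, z2m) / marg1 M π1 π2 t y1 z1m) *
      π2 t y2 z2m (a2, z2) *
      Real.exp (lam * Qfun M π1 π2 lam t s (y1, y2) (z1m, z2m) (a1, a2) (z1, z2)))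

/-- Averaged local Q-function for agent 2 at time t. -/
noncomputable def Qbar2 (M : DecPOMDP S Y1 Y2 A1 A2 Z1 Z2)
    (π1 : ℕ → Y1 → Z1 → A1 × Z1 → ℝ) (π2 : ℕ → Y2 → Z2 → A2 × Z2 → ℝ)
    (lam : ℝ) (t : ℕ) (y2 : Y2) (z2m : Z2) (a2 : A2) (z2 : Z2) : ℝ :=
  (1/lam) * Real.log
    (∑ s : S, ∑ y1 : Y1, ∑ z1m : Z1, ∑ a1 : A1, ∑ z1 : Z1,
      (zetaM M π1 π2 t s (y1, y2) (z1m, z2m) / marg2 M π1 π2 t y2 z2m) *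
      π1 t y1 z1m (a1, z1) *
      Real.exp (lam * Qfun M π1 π2 lam t s (y1, y2) (z1m, z2m) (a1, a2) (z1, z2)))

/-- `g` is a greedy update for agent 1 at time `t`: at each (y¹,z¹₋) with positive
marginal probability it selects a maximizer of the averaged local Q-function. -/
def IsGreedy1 (M : DecPOMDP S Y1 Y2 A1 A2 Z1 Z2)
    (π1 : ℕ → Y1 → Z1 → A1 × Z1 → ℝ) (π2 : ℕ → Y2 → Z2 → A2 × Z2 → ℝ)
    (lam : ℝ) (t : ℕ) (g : Y1 → Z1 → A1 × Z1) : Prop :=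
  ∀ y1 z1m, 0 < marg1 M π1 π2 t y1 z1m →
    ∀ a1 z1, Qbar1 M π1 π2 lam t y1 z1m a1 z1 ≤
      Qbar1 M π1 π2 lam t y1 z1m (g y1 z1m).1 (g y1 z1m).2

/-- `g` is a greedy update for agent 2 at time `t`. -/
def IsGreedy2 (M : DecPOMDP S Y1 Y2 A1 A2 Z1 Z2)
    (π1 : ℕ → Y1 → Z1 → A1 × Z1 → ℝ) (π2 : ℕ → Y2 → Z2 → A2 × Z2 → ℝ)
    (lam : ℝ) (t : ℕ) (g : Y2 → Z2 → A2 × Z2) : Prop :=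
  ∀ y2 z2m, 0 < marg2 M π1 π2 t y2 z2m →
    ∀ a2 z2, Qbar2 M π1 π2 lam t y2 z2m a2 z2 ≤
      Qbar2 M π1 π2 lam t y2 z2m (g y2 z2m).1 (g y2 z2m).2

/-- The (deterministic) stage rule that puts all mass on `g y z`. -/
noncomputable def detRule {Y Z A : Type} (g : Y → Z → A × Z) : Y → Z → A × Z → ℝ :=
  fun y z x => if x = g y z then 1 else 0

/-!
Group the exponential sum by agent 2's local information `(y², z²₋)`. Within a group with
positive marginal, the sum over the remaining variables at a fixed choice `x = (a², z²)` of
agent 2 is `marg2 · exp (λ Q̄²(x))`, so a maximizer of `Q̄²` also maximizes this unnormalized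
mass, and averaging it over `π²_t` can only lose against the maximizer. Groups with zero
marginal contribute nothing on either side.
-/

section Regroup

variable {σ α β γ δ ε : Type*} [Fintype σ] [Fintype α] [Fintype β] [Fintype γ] [Fintype δ]
  [Fintype ε] {R : Type*} [AddCommMonoid R]

theorem sum_prod_sum_prod_eq_sum_snd_prod (f : α × β → γ × δ → R) :
    ∑ a : α × β, ∑ c : γ × δ, f a c = ∑ x : β × δ, ∑ a : α, ∑ c : γ, f (a, x.1) (c, x.2) := by
  rw [Fintype.sum_prod_type (f := fun x : β × δ => ∑ a : α, ∑ c : γ, f (a, x.1) (c, x.2))]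
  simp only [Fintype.sum_prod_type_right]
  exact sum_congr rfl fun _ _ => sum_comm

theorem sum_sum_prod_sum_prod_eq_sum_snd_sum_snd (f : σ → α × β → γ × δ → R) :
    ∑ s : σ, ∑ a : α × β, ∑ c : γ × δ, f s a c
      = ∑ b : β, ∑ d : δ, ∑ s : σ, ∑ a : α, ∑ c : γ, f s (a, b) (c, d) := by
  simp only [Fintype.sum_prod_type_right]
  rw [sum_comm]
  exact sum_congr rfl fun _ _ => (sum_congr rfl fun _ _ => sum_comm).trans sum_comm

theorem sum_sum_prod_sum_prod_sum_eq_sum_snd_sum_snd_sum (f : σ → α × β → γ × δ → ε → R) :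
    ∑ s : σ, ∑ a : α × β, ∑ c : γ × δ, ∑ x : ε, f s a c x
      = ∑ b : β, ∑ d : δ, ∑ x : ε, ∑ s : σ, ∑ a : α, ∑ c : γ, f s (a, b) (c, d) x := by
  rw [sum_sum_prod_sum_prod_eq_sum_snd_sum_snd]
  refine sum_congr rfl fun _ _ => sum_congr rfl fun _ _ => ?_
  exact (sum_congr rfl fun _ _ => (sum_congr rfl fun _ _ => sum_comm).trans sum_comm).trans sum_comm

end Regroup

section WeightedSum

variable {ι : Type*} [Fintype ι] {μ c : ι → ℝ}

theorem sum_mul_pos_of_sum_pos (hμ : ∀ i, 0 ≤ μ i) (hc : ∀ i, 0 < c i) (h : 0 < ∑ i, μ i) :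
    0 < ∑ i, μ i * c i := by
  obtain ⟨i, -, hi⟩ := (sum_pos_iff_of_nonneg fun i _ => hμ i).1 h
  exact sum_pos' (fun j _ => mul_nonneg (hμ j) (hc j).le) ⟨i, mem_univ i, mul_pos hi (hc i)⟩

theorem sum_mul_eq_zero_of_sum_eq_zero (hμ : ∀ i, 0 ≤ μ i) (h : ∑ i, μ i = 0) :
    ∑ i, μ i * c i = 0 := by
  have hμ0 : μ = 0 := (Fintype.sum_eq_zero_iff_of_nonneg fun i => hμ i).1 h
  simp [hμ0]

theorem sum_mul_le_of_forall_le (hμ : ∀ i, 0 ≤ μ i) (h1 : ∑ i, μ i = 1) {i₀ : ι}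
    (h : ∀ i, c i ≤ c i₀) : ∑ i, μ i * c i ≤ c i₀ :=
  calc ∑ i, μ i * c i ≤ ∑ i, μ i * c i₀ :=
        sum_le_sum fun i _ => mul_le_mul_of_nonneg_left (h i) (hμ i)
    _ = c i₀ := by rw [← sum_mul, h1, one_mul]

end WeightedSum

section Greedy

variable {S Y1 Y2 A1 A2 Z1 Z2 : Type}
  [Fintype S] [Fintype Y1] [Fintype Y2] [Fintype A1] [Fintype A2] [Fintype Z1] [Fintype Z2]
  (M : DecPOMDP S Y1 Y2 A1 A2 Z1 Z2)

/-- `marg2 · exp (λ · Qbar2)`: the sum inside the logarithm of `Qbar2`, before division by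
`marg2`. -/
noncomputable def Qbar2Num (π1 : ℕ → Y1 → Z1 → A1 × Z1 → ℝ) (π2 : ℕ → Y2 → Z2 → A2 × Z2 → ℝ)
    (lam : ℝ) (t : ℕ) (y2 : Y2) (z2m : Z2) (x : A2 × Z2) : ℝ :=
  ∑ s : S, ∑ y1 : Y1, ∑ z1m : Z1, ∑ a1 : A1, ∑ z1 : Z1,
    zetaM M π1 π2 t s (y1, y2) (z1m, z2m) * π1 t y1 z1m (a1, z1) *
    Real.exp (lam * Qfun M π1 π2 lam t s (y1, y2) (z1m, z2m) (a1, x.1) (z1, x.2))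

variable {π1 : ℕ → Y1 → Z1 → A1 × Z1 → ℝ} {π2 : ℕ → Y2 → Z2 → A2 × Z2 → ℝ}

theorem zetaM_nonneg (hπ1 : IsPolicy π1) (hπ2 : IsPolicy π2) (t : ℕ) (s : S) (y : Y1 × Y2)
    (zm : Z1 × Z2) : 0 ≤ zetaM M π1 π2 t s y zm := by
  induction t generalizing s y zm with
  | zero => exact mul_nonneg (mul_nonneg (M.init_nonneg _) (M.phi1_nonneg _)) (M.phi2_nonneg _)
  | succ t ih =>
    refine sum_nonneg fun _ _ => sum_nonneg fun _ _ =>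
      sum_nonneg fun _ _ => sum_nonneg fun _ _ => ?_
    exact mul_nonneg (mul_nonneg (ih ..) (mul_nonneg ((hπ1 t).1 ..) ((hπ2 t).1 ..)))
      (M.P_nonneg ..)

theorem Qbar2_eq_log_Qbar2Num_div (lam : ℝ) (t : ℕ) (y2 : Y2) (z2m : Z2) (x : A2 × Z2) :
    Qbar2 M π1 π2 lam t y2 z2m x.1 x.2
      = (1 / lam) * Real.log (Qbar2Num M π1 π2 lam t y2 z2m x / marg2 M π1 π2 t y2 z2m) := by
  simp only [Qbar2, Qbar2Num, sum_div, mul_div_right_comm]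

theorem Qbar2Num_eq_sum_mul (lam : ℝ) (t : ℕ) (y2 : Y2) (z2m : Z2) (x : A2 × Z2) :
    Qbar2Num M π1 π2 lam t y2 z2m x
      = ∑ i : S × Y1 × Z1, zetaM M π1 π2 t i.1 (i.2.1, y2) (i.2.2, z2m) *
          ∑ w : A1 × Z1, π1 t i.2.1 i.2.2 w *
            Real.exp
              (lam * Qfun M π1 π2 lam t i.1 (i.2.1, y2) (i.2.2, z2m) (w.1, x.1) (w.2, x.2)) := by
  simp only [Qbar2Num, Fintype.sum_prod_type, mul_sum, mul_assoc]

theorem marg2_eq_sum (t : ℕ) (y2 : Y2) (z2m : Z2) :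
    marg2 M π1 π2 t y2 z2m = ∑ i : S × Y1 × Z1, zetaM M π1 π2 t i.1 (i.2.1, y2) (i.2.2, z2m) := by
  simp only [marg2, Fintype.sum_prod_type]

theorem Qbar2Num_pos (hπ1 : IsPolicy π1) (hπ2 : IsPolicy π2) (lam : ℝ) {t : ℕ} {y2 : Y2}
    {z2m : Z2} (hm : 0 < marg2 M π1 π2 t y2 z2m) (x : A2 × Z2) :
    0 < Qbar2Num M π1 π2 lam t y2 z2m x := by
  rw [marg2_eq_sum] at hm
  rw [Qbar2Num_eq_sum_mul]
  refine sum_mul_pos_of_sum_pos (fun _ => zetaM_nonneg M hπ1 hπ2 ..) (fun i => ?_) hm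
  exact sum_mul_pos_of_sum_pos ((hπ1 t).1 _ _) (fun _ => Real.exp_pos _)
    (((hπ1 t).2 _ _).symm ▸ one_pos)

theorem Qbar2Num_eq_zero (hπ1 : IsPolicy π1) (hπ2 : IsPolicy π2) (lam : ℝ) {t : ℕ} {y2 : Y2}
    {z2m : Z2} (hm : marg2 M π1 π2 t y2 z2m = 0) (x : A2 × Z2) :
    Qbar2Num M π1 π2 lam t y2 z2m x = 0 := by
  rw [marg2_eq_sum] at hm
  rw [Qbar2Num_eq_sum_mul]
  exact sum_mul_eq_zero_of_sum_eq_zero (fun _ => zetaM_nonneg M hπ1 hπ2 ..) hm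

theorem Qbar2Num_le_of_isGreedy2 (hπ1 : IsPolicy π1) (hπ2 : IsPolicy π2) {lam : ℝ}
    (hlam : 0 < lam) {t : ℕ} {g : Y2 → Z2 → A2 × Z2} (hg : IsGreedy2 M π1 π2 lam t g)
    (y2 : Y2) (z2m : Z2) (x : A2 × Z2) :
    Qbar2Num M π1 π2 lam t y2 z2m x ≤ Qbar2Num M π1 π2 lam t y2 z2m (g y2 z2m) := by
  have hm_nonneg : 0 ≤ marg2 M π1 π2 t y2 z2m :=
    sum_nonneg fun _ _ => sum_nonneg fun _ _ => sum_nonneg fun _ _ => zetaM_nonneg M hπ1 hπ2 ..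
  rcases hm_nonneg.eq_or_lt with hm0 | hm
  · rw [Qbar2Num_eq_zero M hπ1 hπ2 lam hm0.symm, Qbar2Num_eq_zero M hπ1 hπ2 lam hm0.symm]
  · have h := hg y2 z2m hm x.1 x.2
    rwa [Qbar2_eq_log_Qbar2Num_div, Qbar2_eq_log_Qbar2Num_div (x := g y2 z2m),
      mul_le_mul_iff_right₀ (one_div_pos.2 hlam),
      Real.log_le_log_iff (div_pos (Qbar2Num_pos M hπ1 hπ2 lam hm x) hm)
        (div_pos (Qbar2Num_pos M hπ1 hπ2 lam hm _) hm),
      div_le_div_iff_of_pos_right hm] at h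

theorem sum_exp_Qfun_eq_sum_Qbar2Num (lam : ℝ) (t : ℕ) :
    (∑ s : S, ∑ y : Y1 × Y2, ∑ zm : Z1 × Z2, ∑ a : A1 × A2, ∑ z : Z1 × Z2,
        zetaM M π1 π2 t s y zm *
        (π1 t y.1 zm.1 (a.1, z.1) * π2 t y.2 zm.2 (a.2, z.2)) *
        Real.exp (lam * Qfun M π1 π2 lam t s y zm a z))
      = ∑ y2 : Y2, ∑ z2m : Z2, ∑ x : A2 × Z2,
          π2 t y2 z2m x * Qbar2Num M π1 π2 lam t y2 z2m x := by
  simp only [sum_prod_sum_prod_eq_sum_snd_prod (α := A1)]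
  rw [sum_sum_prod_sum_prod_sum_eq_sum_snd_sum_snd_sum]
  simp only [Qbar2Num, mul_sum, Prod.mk.eta]
  ac_rfl

theorem sum_exp_Qfun_greedy_eq_sum_Qbar2Num (lam : ℝ) (t : ℕ) (g : Y2 → Z2 → A2 × Z2) :
    (∑ s : S, ∑ y : Y1 × Y2, ∑ zm : Z1 × Z2, ∑ a1 : A1, ∑ z1 : Z1,
        zetaM M π1 π2 t s y zm * π1 t y.1 zm.1 (a1, z1) *
        Real.exp (lam * Qfun M π1 π2 lam t s y zm
          (a1, (g y.2 zm.2).1) (z1, (g y.2 zm.2).2)))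
      = ∑ y2 : Y2, ∑ z2m : Z2, Qbar2Num M π1 π2 lam t y2 z2m (g y2 z2m) :=
  sum_sum_prod_sum_prod_eq_sum_snd_sum_snd _

end Greedy

theorem key_inequality_ineq2_general
    (M : DecPOMDP S Y1 Y2 A1 A2 Z1 Z2)
    (π1 : ℕ → Y1 → Z1 → A1 × Z1 → ℝ) (π2 : ℕ → Y2 → Z2 → A2 × Z2 → ℝ)
    (hπ1 : IsPolicy π1) (hπ2 : IsPolicy π2)
    (lam : ℝ) (hlam : 0 < lam) (t : ℕ)
    (g : Y2 → Z2 → A2 × Z2) (hg : IsGreedy2 M π1 π2 lam t g) :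
    (∑ s : S, ∑ y : Y1 × Y2, ∑ zm : Z1 × Z2, ∑ a : A1 × A2, ∑ z : Z1 × Z2,
        zetaM M π1 π2 t s y zm *
        (π1 t y.1 zm.1 (a.1, z.1) * π2 t y.2 zm.2 (a.2, z.2)) *
        Real.exp (lam * Qfun M π1 π2 lam t s y zm a z))
    ≤ ∑ s : S, ∑ y : Y1 × Y2, ∑ zm : Z1 × Z2, ∑ a1 : A1, ∑ z1 : Z1,
        zetaM M π1 π2 t s y zm * π1 t y.1 zm.1 (a1, z1) *
        Real.exp (lam * Qfun M π1 π2 lam t s y zm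
          (a1, (g y.2 zm.2).1) (z1, (g y.2 zm.2).2)) := by
  rw [sum_exp_Qfun_eq_sum_Qbar2Num, sum_exp_Qfun_greedy_eq_sum_Qbar2Num]
  exact sum_le_sum fun y2 _ => sum_le_sum fun z2m _ =>
    sum_mul_le_of_forall_le ((hπ2 t).1 _ _) ((hπ2 t).2 _ _)
      (Qbar2Num_le_of_isGreedy2 M hπ1 hπ2 hlam hg y2 z2m)

/-- **Key inequality (eq:ineq-2) in the proof of Proposition 1.**
For λ > 0, a joint policy (π1, π2), a time t < T and any greedy update `g` for
agent 2 at time t: substituting the deterministic greedy choice of agent 2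
cannot decrease the exponential performance from time t. -/
theorem key_inequality_ineq2
    (M : DecPOMDP S Y1 Y2 A1 A2 Z1 Z2)
    (π1 : ℕ → Y1 → Z1 → A1 × Z1 → ℝ) (π2 : ℕ → Y2 → Z2 → A2 × Z2 → ℝ)
    (hπ1 : IsPolicy π1) (hπ2 : IsPolicy π2)
    (lam : ℝ) (hlam : 0 < lam) (t : ℕ) (ht : t < M.T)
    (g : Y2 → Z2 → A2 × Z2) (hg : IsGreedy2 M π1 π2 lam t g) :
    (∑ s : S, ∑ y : Y1 × Y2, ∑ zm : Z1 × Z2, ∑ a : A1 × A2, ∑ z : Z1 × Z2,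
        zetaM M π1 π2 t s y zm *
        (π1 t y.1 zm.1 (a.1, z.1) * π2 t y.2 zm.2 (a.2, z.2)) *
        Real.exp (lam * Qfun M π1 π2 lam t s y zm a z))
    ≤ ∑ s : S, ∑ y : Y1 × Y2, ∑ zm : Z1 × Z2, ∑ a1 : A1, ∑ z1 : Z1,
        zetaM M π1 π2 t s y zm * π1 t y.1 zm.1 (a1, z1) *
        Real.exp (lam * Qfun M π1 π2 lam t s y zm
          (a1, (g y.2 zm.2).1) (z1, (g y.2 zm.2).2)) :=
  key_inequality_ineq2_general M π1 π2 hπ1 hπ2 lam hlam t g hg
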